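/- arXiv:2411.00581 — 4 statements merged into one kernel-verified Lean document; each statement's English description precedes it below -/
import Mathlib

section
/- Let P : ℝ → ℝ be a positive differentiable function satisfying P' = X·P + U, where X, U : ℝ → ℝ are functions with lim_{η→∞} X(η) = -1 and lim_{η→∞} U(η) = u for some u ≥ 0. Then lim_{η→∞} P(η) = u. -/
/-!
Since `X → -1`, eventually `X < 0`, and then for any level `c` the sign of `P - c` gives
`deriv P ≤ X c + U` while `P ≥ c`, and `deriv P ≥ X c + U` while `P ≤ c`. As `X c + U → u - c`,
for `c > u` the solution decreases at a uniform rate whenever it is above `c`, so it eventually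
drops below `c` and cannot cross `c` upwards again; symmetrically for `c < u`.
-/

open Filter Set Topology

section EventualBound

variable {f : ℝ → ℝ} {a c m : ℝ}

theorem exists_ge_le_of_deriv_le_neg (hf : Differentiable ℝ f) (hm : 0 < m)
    (h : ∀ t ≥ a, c ≤ f t → deriv f t ≤ -m) : ∃ t ≥ a, f t ≤ c := by
  by_contra! habove
  set t := a + (f a - c) / m
  have hat : a ≤ t := le_add_of_nonneg_right (div_nonneg (sub_pos.2 (habove a le_rfl)).le hm.le)
  have hdecay : f t - f a ≤ -m * (t - a) :=
    (convex_Ici a).image_sub_le_mul_sub_of_deriv_le hf.continuous.continuousOn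
      hf.differentiableOn
      (fun x hx => h x (interior_subset hx) (habove x (interior_subset hx)).le)
      a self_mem_Ici t hat hat
  have hdrop : m * (t - a) = f a - c := by simp only [t]; field_simp; ring
  linarith [habove t hat]

theorem le_const_of_deriv_neg_of_eq_const (hf : Differentiable ℝ f) (ha : f a ≤ c)
    (h : ∀ t ≥ a, f t = c → deriv f t < 0) : ∀ t ≥ a, f t ≤ c := fun _ hat =>
  image_le_of_deriv_right_lt_deriv_boundary' (B := fun _ => c) (B' := fun _ => 0)
    hf.continuous.continuousOn (fun x _ => (hf x).hasDerivAt.hasDerivWithinAt) ha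
    continuousOn_const (fun _ _ => hasDerivWithinAt_const _ _ _)
    (fun x hx => h x hx.1) ⟨hat, le_rfl⟩

theorem eventually_le_of_deriv_le_neg (hf : Differentiable ℝ f) (hm : 0 < m)
    (h : ∀ᶠ t in atTop, c ≤ f t → deriv f t ≤ -m) : ∀ᶠ t in atTop, f t ≤ c := by
  obtain ⟨a, ha⟩ := eventually_atTop.1 h
  obtain ⟨t₀, ht₀a, ht₀⟩ := exists_ge_le_of_deriv_le_neg hf hm ha
  exact eventually_atTop.2 ⟨t₀, le_const_of_deriv_neg_of_eq_const hf ht₀ fun t ht hft =>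
    (ha t (ht₀a.trans ht) hft.ge).trans_lt (neg_neg_of_pos hm)⟩

theorem eventually_ge_of_le_deriv (hf : Differentiable ℝ f) (hm : 0 < m)
    (h : ∀ᶠ t in atTop, f t ≤ c → m ≤ deriv f t) : ∀ᶠ t in atTop, c ≤ f t := by
  have hneg : ∀ᶠ t in atTop, -c ≤ (-f) t → deriv (-f) t ≤ -m :=
    h.mono fun t ht hc => by
      rw [deriv.neg']
      exact neg_le_neg (ht (neg_le_neg_iff.1 hc))
  exact (eventually_le_of_deriv_le_neg hf.neg hm hneg).mono fun t ht => neg_le_neg_iff.1 ht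

end EventualBound

theorem stmt_0_general (P X U : ℝ → ℝ) (u : ℝ)
    (hdiff : Differentiable ℝ P)
    (hode : ∀ η, deriv P η = X η * P η + U η)
    (hX : Filter.Tendsto X Filter.atTop (nhds (-1)))
    (hU : Filter.Tendsto U Filter.atTop (nhds u)) :
    Filter.Tendsto P Filter.atTop (nhds u) := by
  have hXneg : ∀ᶠ t in atTop, X t < 0 := hX.eventually (gt_mem_nhds (by norm_num))
  have hlevel (c : ℝ) : Tendsto (fun t => X t * c + U t) atTop (𝓝 (u - c)) := by
    simpa [neg_mul, neg_add_eq_sub] using (hX.mul_const c).add hU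
  refine tendsto_order.2 ⟨fun b hb => ?_, fun b hb => ?_⟩
  · obtain ⟨c, hbc, hcu⟩ := exists_between hb
    have hrate : ∀ᶠ t in atTop, (u - c) / 2 < X t * c + U t :=
      (hlevel c).eventually (lt_mem_nhds (by linarith))
    have hbelow : ∀ᶠ t in atTop, P t ≤ c → (u - c) / 2 ≤ deriv P t := by
      filter_upwards [hXneg, hrate] with t hXt hrt hPc
      rw [hode]
      nlinarith
    filter_upwards [eventually_ge_of_le_deriv hdiff (by linarith) hbelow] with t ht
    exact hbc.trans_le ht
  · obtain ⟨c, huc, hcb⟩ := exists_between hb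
    have hrate : ∀ᶠ t in atTop, X t * c + U t < -((c - u) / 2) :=
      (hlevel c).eventually (gt_mem_nhds (by linarith))
    have habove : ∀ᶠ t in atTop, c ≤ P t → deriv P t ≤ -((c - u) / 2) := by
      filter_upwards [hXneg, hrate] with t hXt hrt hPc
      rw [hode]
      nlinarith
    filter_upwards [eventually_le_of_deriv_le_neg hdiff (by linarith) habove] with t ht
    exact ht.trans_lt hcb

/-- ODE comparison lemma: a positive solution of `P' = X·P + U` with `X → -1`
and `U → u ≥ 0` converges to `u`. -/
theorem stmt_0 (P X U : ℝ → ℝ) (u : ℝ) (hu : 0 ≤ u)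
    (hpos : ∀ η, 0 < P η) (hdiff : Differentiable ℝ P)
    (hode : ∀ η, deriv P η = X η * P η + U η)
    (hX : Filter.Tendsto X Filter.atTop (nhds (-1)))
    (hU : Filter.Tendsto U Filter.atTop (nhds u)) :
    Filter.Tendsto P Filter.atTop (nhds u) :=
  stmt_0_general P X U u hdiff hode hX hU
end

section
/- Let m ≥ 1 and suppose μ, ν > 0 satisfy μ² = (2μ⁴ + 4m·μ⁴ν⁴)/(4 - 2μ² + 4m·ν⁴) and ν² = (4 - 2μ² + 4m·ν⁴)/((4m+8) - 2μ²ν² - 4ν²), with μ² ≤ 1 and ν² ≤ 1. Then (μ², ν²) = (1, 1) or (μ², ν²) = (1, 1/(2m+3)). -/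
/-!
Clearing denominators, the first equation factors as `μ² (1 - μ²) (1 + m ν⁴) = 0`, so `μ² = 1`.
With `μ² = 1` the second becomes `(ν² - 1) ((4m + 6) ν² - 2) = 0`. Denominators never vanish:
a zero denominator would force the left-hand side to be `0`, which the equations rule out.
-/

lemma mul_eq_of_eq_div_of_ne_zero {K : Type*} [DivisionRing K] {x a b : K}
    (h : x = a / b) (hx : x ≠ 0) : x * b = a := by
  have hb : b ≠ 0 := by
    rintro rfl
    exact hx (by simpa using h)
  rw [h, div_mul_cancel₀ a hb]

lemma sq_eq_one_of_eq_div {c μ ν : ℝ} (hc : 0 ≤ c) (hμ : μ ≠ 0)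
    (h : μ^2 = (2 * μ^4 + 4 * c * μ^4 * ν^4) / (4 - 2 * μ^2 + 4 * c * ν^4)) :
    μ^2 = 1 := by
  have hμ2 : μ^2 ≠ 0 := pow_ne_zero 2 hμ
  have hfactor : μ^2 * (1 - μ^2) * (1 + c * ν^4) = 0 := by
    linear_combination mul_eq_of_eq_div_of_ne_zero h hμ2 / 4
  have hpos : 0 < 1 + c * ν^4 := by positivity
  rcases mul_eq_zero.1 hfactor with h' | h'
  · rcases mul_eq_zero.1 h' with h'' | h''
    · exact absurd h'' hμ2
    · linarith
  · exact absurd h' hpos.ne'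

lemma sq_eq_one_or_eq_inv_of_eq_div {c ν : ℝ} (hc : 0 ≤ c)
    (h : ν^2 = (2 + 4 * c * ν^4) / ((4 * c + 8) - 6 * ν^2)) :
    ν^2 = 1 ∨ ν^2 = 1 / (2 * c + 3) := by
  have hν2 : ν^2 ≠ 0 := by
    intro h0
    rw [h0, mul_zero, sub_zero] at h
    have : (0 : ℝ) < (2 + 4 * c * ν^4) / (4 * c + 8) := by positivity
    linarith
  have hfactor : (ν^2 - 1) * ((4 * c + 6) * ν^2 - 2) = 0 := by
    linear_combination -mul_eq_of_eq_div_of_ne_zero h hν2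
  rcases mul_eq_zero.1 hfactor with h' | h'
  · left; linarith
  · right
    field_simp
    linarith

theorem stmt_8_general (m : ℕ) (μ ν : ℝ) (hμ : 0 < μ)
    (h1 : μ^2 = (2 * μ^4 + 4 * m * μ^4 * ν^4) / (4 - 2 * μ^2 + 4 * m * ν^4))
    (h2 : ν^2 = (4 - 2 * μ^2 + 4 * m * ν^4) /
        ((4 * m + 8) - 2 * μ^2 * ν^2 - 4 * ν^2)) :
    (μ^2 = 1 ∧ ν^2 = 1) ∨ (μ^2 = 1 ∧ ν^2 = 1 / (2 * (m : ℝ) + 3)) := by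
  have hm : (0 : ℝ) ≤ m := m.cast_nonneg
  have hμ1 : μ^2 = 1 := sq_eq_one_of_eq_div hm hμ.ne' h1
  have h2' : ν^2 = (2 + 4 * m * ν^4) / ((4 * m + 8) - 6 * ν^2) := by
    convert h2 using 2 <;> rw [hμ1] <;> ring
  rcases sq_eq_one_or_eq_inv_of_eq_div hm h2' with hν | hν
  · exact Or.inl ⟨hμ1, hν⟩
  · exact Or.inr ⟨hμ1, hν⟩

/-- Solutions of the algebraic limit equations for `(μ², ν²)` when `μ ≠ 0`. -/
theorem stmt_8 (m : ℕ) (hm : 1 ≤ m) (μ ν : ℝ) (hμ : 0 < μ) (hν : 0 < ν)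
    (hμ1 : μ^2 ≤ 1) (hν1 : ν^2 ≤ 1)
    (h1 : μ^2 = (2 * μ^4 + 4 * m * μ^4 * ν^4) / (4 - 2 * μ^2 + 4 * m * ν^4))
    (h2 : ν^2 = (4 - 2 * μ^2 + 4 * m * ν^4) /
        ((4 * m + 8) - 2 * μ^2 * ν^2 - 4 * ν^2)) :
    (μ^2 = 1 ∧ ν^2 = 1) ∨ (μ^2 = 1 ∧ ν^2 = 1 / (2 * (m : ℝ) + 3)) :=
  stmt_8_general m μ ν hμ h1 h2
end

section
/- Let W : ℝ → ℝ be positive and differentiable with W' = 2W²·(G/W - ε/2), where ε > 0 and G/W → 0 as η → ∞. Then lim_{η→∞} η·W(η) = 1/ε. -/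
/-!
Since `W > 0`, its reciprocal `V = 1/W` satisfies the linear equation `V' = ε - 2 G/W`, so
`V' → ε`. The mean value theorem turns this into `V(η)/η → ε`, and `η W(η) = (V(η)/η)⁻¹ → 1/ε`.
-/

open Filter Topology Asymptotics

theorem isLittleO_id_of_tendsto_deriv_zero {E : Type*} [NormedAddCommGroup E] [NormedSpace ℝ E]
    {g : ℝ → E} (hg : ∀ᶠ x in atTop, DifferentiableAt ℝ g x)
    (h : Tendsto (deriv g) atTop (𝓝 0)) : g =o[atTop] id := by
  refine isLittleO_iff.2 fun c hc => ?_
  have hsmall : ∀ᶠ x in atTop, ‖deriv g x‖ ≤ c / 2 :=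
    (tendsto_zero_iff_norm_tendsto_zero.1 h).eventually (ge_mem_nhds (half_pos hc))
  obtain ⟨a, ha⟩ := eventually_atTop.1 (hg.and hsmall)
  have hmvt : ∀ x, a ≤ x → ‖g x - g a‖ ≤ c / 2 * |x - a| := fun x hx =>
    (convex_Ici a).norm_image_sub_le_of_norm_deriv_le (fun y hy => (ha y hy).1)
      (fun y hy => (ha y hy).2) Set.self_mem_Ici hx
  filter_upwards [eventually_ge_atTop a, eventually_ge_atTop (2 * ‖g a‖ / c + |a|)] with x hxa hx
  have hga : 2 * ‖g a‖ ≤ c * (x - |a|) := by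
    rw [← div_le_iff₀' hc]; linarith
  have hx0 : 0 ≤ x := by
    have : 0 ≤ 2 * ‖g a‖ / c := by positivity
    linarith [abs_nonneg a]
  have hdist : c / 2 * |x - a| ≤ c / 2 * (x + |a|) := by
    gcongr
    calc |x - a| ≤ |x| + |a| := abs_sub _ _
      _ = x + |a| := by rw [abs_of_nonneg hx0]
  calc ‖g x‖ ≤ ‖g a‖ + ‖g x - g a‖ := norm_le_insert' _ _
    _ ≤ c * ‖id x‖ := by
      rw [id, Real.norm_of_nonneg hx0]
      linarith [hmvt x hxa]

theorem tendsto_div_id_of_tendsto_deriv {f : ℝ → ℝ} {l : ℝ}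
    (hf : ∀ᶠ x in atTop, DifferentiableAt ℝ f x) (h : Tendsto (deriv f) atTop (𝓝 l)) :
    Tendsto (fun x => f x / x) atTop (𝓝 l) := by
  set g : ℝ → ℝ := fun x => f x - l * x
  have hg : ∀ᶠ x in atTop, DifferentiableAt ℝ g x := by
    filter_upwards [hf] with x hx
    fun_prop
  have hg' : Tendsto (deriv g) atTop (𝓝 0) := by
    have : Tendsto (fun x => deriv f x - l) atTop (𝓝 (l - l)) := h.sub_const l
    rw [sub_self] at this
    refine this.congr' ?_
    filter_upwards [hf] with x hx
    have hgx : HasDerivAt g (deriv f x - l * 1) x :=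
      hx.hasDerivAt.sub ((hasDerivAt_id x).const_mul l)
    rw [hgx.deriv, mul_one]
  have := (isLittleO_id_of_tendsto_deriv_zero hg hg').tendsto_div_nhds_zero.add_const l
  rw [zero_add] at this
  refine this.congr' ?_
  filter_upwards [eventually_ne_atTop 0] with x hx
  simp only [g, id]
  field_simp
  ring

/-- Asymptotics of `W` along expanding soliton trajectories: `η·W → 1/ε`. -/
theorem stmt_13 (ε : ℝ) (hε : 0 < ε) (W G : ℝ → ℝ)
    (hWpos : ∀ η, 0 < W η) (hWd : Differentiable ℝ W)
    (hW' : ∀ η, deriv W η = 2 * W η ^ 2 * (G η / W η - ε / 2))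
    (hGW : Filter.Tendsto (fun η => G η / W η) Filter.atTop (nhds 0)) :
    Filter.Tendsto (fun η => η * W η) Filter.atTop (nhds (1 / ε)) := by
  have hW0 : ∀ η, W η ≠ 0 := fun η => (hWpos η).ne'
  have hderiv_inv : deriv W⁻¹ = fun η => ε - 2 * (G η / W η) := by
    funext η
    rw [((hWd η).hasDerivAt.inv (hW0 η)).deriv, hW']
    field_simp [hW0 η]
    ring
  have hslope : Tendsto (fun η => W⁻¹ η / η) atTop (𝓝 ε) := by
    refine tendsto_div_id_of_tendsto_deriv (.of_forall fun η => (hWd η).inv (hW0 η)) ?_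
    simpa [hderiv_inv] using (hGW.const_mul 2).const_sub ε
  simpa [div_eq_mul_inv, mul_comm] using hslope.inv₀ hε.ne'
end

section
/- Along any solution of the full system (X₁, X₂, X₃, Y₁, Y₂, Y₃, W)' = V with V as in the cohomogeneity-one Ricci soliton equation, the quantities satisfy: (Y₂²/(Y₁²W))' = -2·(Y₂²/(Y₁²W))·X₁, (Y₂²/W)' = -2·(Y₂²/W)·X₂, and (Y₂Y₃/W)' = -2·(Y₂Y₃/W)·X₃, wherever Y₁, W > 0. In particular, if X₁, X₂, X₃ ≥ 0 along the solution, then these three positive quantities are non-increasing and hence converge. -/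
/-!
Each of the three quantities is a monomial in `Y₁, Y₂, Y₃, W`, so its logarithmic derivative is
the matching integer combination of the logarithmic derivatives `X₁ - X₂`, `G - εW/2 - X₂`,
`G - εW/2 + X₂ - 2X₃`, `2(G - εW/2)` of the factors. In all three combinations the term
`G - εW/2` cancels, leaving `-2X₁`, `-2X₂` and `-2X₃`. When the `X_i` are nonnegative the
quantities are therefore nonincreasing, and being positive they converge.
-/

open Filter Topology

section LogarithmicDerivative

variable {𝕜 𝕜' : Type*} [NontriviallyNormedField 𝕜] [NontriviallyNormedField 𝕜']
  [NormedAlgebra 𝕜 𝕜'] {u v : 𝕜 → 𝕜'} {a b : 𝕜'} {x : 𝕜}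

theorem HasDerivAt.mul_logDeriv (hu : HasDerivAt u (u x * a) x) (hv : HasDerivAt v (v x * b) x) :
    HasDerivAt (fun t => u t * v t) (u x * v x * (a + b)) x :=
  (hu.mul hv).congr_deriv (by ring)

theorem HasDerivAt.div_logDeriv (hu : HasDerivAt u (u x * a) x) (hv : HasDerivAt v (v x * b) x)
    (hvx : v x ≠ 0) : HasDerivAt (fun t => u t / v t) (u x / v x * (a - b)) x :=
  (hu.fun_div hv hvx).congr_deriv (by field_simp)

theorem HasDerivAt.pow_logDeriv (hu : HasDerivAt u (u x * a) x) (n : ℕ) :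
    HasDerivAt (fun t => u t ^ n) (u x ^ n * (n * a)) x := by
  refine (hu.pow n).congr_deriv ?_
  cases n with
  | zero => simp
  | succ n => simp only [Nat.add_sub_cancel]; push_cast; ring

end LogarithmicDerivative

theorem hasDerivAt_of_deriv_eq {𝕜 : Type*} [NontriviallyNormedField 𝕜]
    {f f' : 𝕜 → 𝕜} (hf : Differentiable 𝕜 f) (h : ∀ x, deriv f x = f' x) (x : 𝕜) :
    HasDerivAt f (f' x) x :=
  h x ▸ (hf x).hasDerivAt

theorem Antitone.exists_tendsto_atTop_of_nonneg {f : ℝ → ℝ} (hf : Antitone f) (h0 : ∀ x, 0 ≤ f x) :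
    ∃ L, Tendsto f atTop (𝓝 L) :=
  ⟨_, tendsto_atTop_ciInf hf ⟨0, Set.forall_mem_range.2 h0⟩⟩

theorem antitone_of_hasDerivAt_eq_neg_mul {f g : ℝ → ℝ} {c : ℝ} (hc : 0 ≤ c)
    (hf : ∀ x, HasDerivAt f (-c * f x * g x) x) (hf0 : ∀ x, 0 ≤ f x) (hg : ∀ x, 0 ≤ g x) :
    Antitone f :=
  antitone_of_hasDerivAt_nonpos (f' := fun x => -c * f x * g x) hf fun x => by
    have := mul_nonneg (mul_nonneg hc (hf0 x)) (hg x)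
    simp only [Pi.zero_apply]
    linarith

theorem stmt_17_general (ε : ℝ) (X₁ X₂ X₃ Y₁ Y₂ Y₃ W G : ℝ → ℝ)
    (hY₁d : Differentiable ℝ Y₁) (hY₂d : Differentiable ℝ Y₂)
    (hY₃d : Differentiable ℝ Y₃) (hWd : Differentiable ℝ W)
    (hY₁' : ∀ η, deriv Y₁ η = Y₁ η * (X₁ η - X₂ η))
    (hY₂' : ∀ η, deriv Y₂ η = Y₂ η * (G η - ε / 2 * W η - X₂ η))
    (hY₃' : ∀ η, deriv Y₃ η = Y₃ η * (G η - ε / 2 * W η + X₂ η - 2 * X₃ η))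
    (hW' : ∀ η, deriv W η = 2 * W η * (G η - ε / 2 * W η)) :
    (∀ η, 0 < Y₁ η → 0 < W η →
      deriv (fun t => Y₂ t ^ 2 / (Y₁ t ^ 2 * W t)) η =
        -2 * (Y₂ η ^ 2 / (Y₁ η ^ 2 * W η)) * X₁ η ∧
      deriv (fun t => Y₂ t ^ 2 / W t) η = -2 * (Y₂ η ^ 2 / W η) * X₂ η ∧
      deriv (fun t => Y₂ t * Y₃ t / W t) η =
        -2 * (Y₂ η * Y₃ η / W η) * X₃ η) ∧
    ((∀ η, 0 < Y₁ η) → (∀ η, 0 < W η) → (∀ η, 0 < Y₂ η) → (∀ η, 0 < Y₃ η) →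
      (∀ η, 0 ≤ X₁ η ∧ 0 ≤ X₂ η ∧ 0 ≤ X₃ η) →
      (Antitone (fun t => Y₂ t ^ 2 / (Y₁ t ^ 2 * W t)) ∧
        Antitone (fun t => Y₂ t ^ 2 / W t) ∧
        Antitone (fun t => Y₂ t * Y₃ t / W t)) ∧
      (∃ L₁, Filter.Tendsto (fun t => Y₂ t ^ 2 / (Y₁ t ^ 2 * W t))
          Filter.atTop (nhds L₁)) ∧
      (∃ L₂, Filter.Tendsto (fun t => Y₂ t ^ 2 / W t) Filter.atTop (nhds L₂)) ∧
      (∃ L₃, Filter.Tendsto (fun t => Y₂ t * Y₃ t / W t)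
          Filter.atTop (nhds L₃))) := by
  have hY₁ := hasDerivAt_of_deriv_eq hY₁d hY₁'
  have hY₂ := hasDerivAt_of_deriv_eq hY₂d hY₂'
  have hY₃ := hasDerivAt_of_deriv_eq hY₃d hY₃'
  have hW : ∀ η, HasDerivAt W (W η * (2 * (G η - ε / 2 * W η))) η := fun η =>
    (hasDerivAt_of_deriv_eq hWd hW' η).congr_deriv (by ring)
  have hq : ∀ η, 0 < Y₁ η → 0 < W η →
      HasDerivAt (fun t => Y₂ t ^ 2 / (Y₁ t ^ 2 * W t))
        (-2 * (Y₂ η ^ 2 / (Y₁ η ^ 2 * W η)) * X₁ η) η ∧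
      HasDerivAt (fun t => Y₂ t ^ 2 / W t) (-2 * (Y₂ η ^ 2 / W η) * X₂ η) η ∧
      HasDerivAt (fun t => Y₂ t * Y₃ t / W t) (-2 * (Y₂ η * Y₃ η / W η) * X₃ η) η := by
    intro η hY₁η hWη
    refine ⟨?_, ?_, ?_⟩
    · refine (((hY₂ η).pow_logDeriv 2).div_logDeriv
        (((hY₁ η).pow_logDeriv 2).mul_logDeriv (hW η)) (by positivity)).congr_deriv ?_
      push_cast; ring
    · refine (((hY₂ η).pow_logDeriv 2).div_logDeriv (hW η) hWη.ne').congr_deriv ?_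
      push_cast; ring
    · exact (((hY₂ η).mul_logDeriv (hY₃ η)).div_logDeriv (hW η) hWη.ne').congr_deriv (by ring)
  refine ⟨fun η hY₁η hWη => ?_, fun hY₁pos hWpos hY₂pos hY₃pos hX => ?_⟩
  · obtain ⟨h₁, h₂, h₃⟩ := hq η hY₁η hWη
    exact ⟨h₁.deriv, h₂.deriv, h₃.deriv⟩
  have hq' := fun η => hq η (hY₁pos η) (hWpos η)
  have h₁ : ∀ η, 0 ≤ Y₂ η ^ 2 / (Y₁ η ^ 2 * W η) := fun η => by
    have := hY₁pos η; have := hWpos η; positivity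
  have h₂ : ∀ η, 0 ≤ Y₂ η ^ 2 / W η := fun η => by have := hWpos η; positivity
  have h₃ : ∀ η, 0 ≤ Y₂ η * Y₃ η / W η := fun η => by
    have := hY₂pos η; have := hY₃pos η; have := hWpos η; positivity
  have hanti₁ :=
    antitone_of_hasDerivAt_eq_neg_mul zero_le_two (fun η => (hq' η).1) h₁ fun η => (hX η).1
  have hanti₂ :=
    antitone_of_hasDerivAt_eq_neg_mul zero_le_two (fun η => (hq' η).2.1) h₂ fun η => (hX η).2.1
  have hanti₃ :=
    antitone_of_hasDerivAt_eq_neg_mul zero_le_two (fun η => (hq' η).2.2) h₃ fun η => (hX η).2.2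
  exact ⟨⟨hanti₁, hanti₂, hanti₃⟩, hanti₁.exists_tendsto_atTop_of_nonneg h₁,
    hanti₂.exists_tendsto_atTop_of_nonneg h₂, hanti₃.exists_tendsto_atTop_of_nonneg h₃⟩

/-- Monotone quantities `Y₂²/(Y₁²W)`, `Y₂²/W`, `Y₂Y₃/W` along the full
cohomogeneity-one Ricci soliton system (Proposition 4.12). -/
theorem stmt_17 (m : ℕ) (ε : ℝ) (X₁ X₂ X₃ Y₁ Y₂ Y₃ W G R₁ R₂ R₃ : ℝ → ℝ)
    (hG : ∀ η, G η = X₁ η ^ 2 + 2 * X₂ η ^ 2 + 4 * m * X₃ η ^ 2)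
    (hR₁ : ∀ η, R₁ η = 2 * Y₁ η ^ 2 * Y₂ η ^ 2 + 4 * m * Y₁ η ^ 2 * Y₃ η ^ 2)
    (hR₂ : ∀ η, R₂ η = 4 * Y₂ η ^ 2 - 2 * Y₁ η ^ 2 * Y₂ η ^ 2 + 4 * m * Y₃ η ^ 2)
    (hR₃ : ∀ η, R₃ η = (4 * m + 8) * Y₂ η * Y₃ η - 2 * Y₁ η ^ 2 * Y₃ η ^ 2
      - 4 * Y₃ η ^ 2)
    (hX₁d : Differentiable ℝ X₁) (hX₂d : Differentiable ℝ X₂)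
    (hX₃d : Differentiable ℝ X₃)
    (hY₁d : Differentiable ℝ Y₁) (hY₂d : Differentiable ℝ Y₂)
    (hY₃d : Differentiable ℝ Y₃) (hWd : Differentiable ℝ W)
    (hX₁' : ∀ η, deriv X₁ η = X₁ η * (G η - ε / 2 * W η - 1) + R₁ η + ε / 2 * W η)
    (hX₂' : ∀ η, deriv X₂ η = X₂ η * (G η - ε / 2 * W η - 1) + R₂ η + ε / 2 * W η)
    (hX₃' : ∀ η, deriv X₃ η = X₃ η * (G η - ε / 2 * W η - 1) + R₃ η + ε / 2 * W η)
    (hY₁' : ∀ η, deriv Y₁ η = Y₁ η * (X₁ η - X₂ η))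
    (hY₂' : ∀ η, deriv Y₂ η = Y₂ η * (G η - ε / 2 * W η - X₂ η))
    (hY₃' : ∀ η, deriv Y₃ η = Y₃ η * (G η - ε / 2 * W η + X₂ η - 2 * X₃ η))
    (hW' : ∀ η, deriv W η = 2 * W η * (G η - ε / 2 * W η)) :
    (∀ η, 0 < Y₁ η → 0 < W η →
      deriv (fun t => Y₂ t ^ 2 / (Y₁ t ^ 2 * W t)) η =
        -2 * (Y₂ η ^ 2 / (Y₁ η ^ 2 * W η)) * X₁ η ∧
      deriv (fun t => Y₂ t ^ 2 / W t) η = -2 * (Y₂ η ^ 2 / W η) * X₂ η ∧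
      deriv (fun t => Y₂ t * Y₃ t / W t) η =
        -2 * (Y₂ η * Y₃ η / W η) * X₃ η) ∧
    ((∀ η, 0 < Y₁ η) → (∀ η, 0 < W η) → (∀ η, 0 < Y₂ η) → (∀ η, 0 < Y₃ η) →
      (∀ η, 0 ≤ X₁ η ∧ 0 ≤ X₂ η ∧ 0 ≤ X₃ η) →
      (Antitone (fun t => Y₂ t ^ 2 / (Y₁ t ^ 2 * W t)) ∧
        Antitone (fun t => Y₂ t ^ 2 / W t) ∧
        Antitone (fun t => Y₂ t * Y₃ t / W t)) ∧
      (∃ L₁, Filter.Tendsto (fun t => Y₂ t ^ 2 / (Y₁ t ^ 2 * W t))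
          Filter.atTop (nhds L₁)) ∧
      (∃ L₂, Filter.Tendsto (fun t => Y₂ t ^ 2 / W t) Filter.atTop (nhds L₂)) ∧
      (∃ L₃, Filter.Tendsto (fun t => Y₂ t * Y₃ t / W t)
          Filter.atTop (nhds L₃))) :=
  stmt_17_general ε X₁ X₂ X₃ Y₁ Y₂ Y₃ W G hY₁d hY₂d hY₃d hWd hY₁' hY₂' hY₃' hW'
end
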